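/- Let g = sl₂(k), k algebraically closed of characteristic zero, and let λ, μ be weights with μ ≠ λ and μ ∉ {λ, s·λ} (where s·λ = −λ−2 is the dot reflection). Then Hom_g(M(μ), M(λ)) = 0: there are no nonzero homomorphisms between Verma modules whose highest weights lie in distinct dot-orbits. -/
import Mathlib


/-- The action of `f` on the Verma module for `sl₂` with basis `v_n` (`n : ℕ`):
`f · v_n = v_{n+1}`. -/
noncomputable def vermaF (k : Type*) [Field k] : (ℕ →₀ k) →ₗ[k] (ℕ →₀ k) :=
  Finsupp.lsum k fun n => Finsupp.lsingle (n + 1)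

/-- The action of `h` on the Verma module of highest weight `lam` for `sl₂`:
`h · v_n = (λ − 2n) v_n`. -/
noncomputable def vermaH (k : Type*) [Field k] (lam : k) : (ℕ →₀ k) →ₗ[k] (ℕ →₀ k) :=
  Finsupp.lsum k fun n => (lam - 2 * (n : k)) • Finsupp.lsingle n

/-- The action of `e` on the Verma module of highest weight `lam` for `sl₂`:
`e · v_n = n(λ − n + 1) v_{n−1}` (and `e · v_0 = 0`). -/
noncomputable def vermaE (k : Type*) [Field k] (lam : k) : (ℕ →₀ k) →ₗ[k] (ℕ →₀ k) :=
  Finsupp.lsum k fun n => ((n : k) * (lam - (n : k) + 1)) • Finsupp.lsingle (n - 1)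

section Aux

variable {k : Type*} [Field k]

lemma vermaH_apply' (lam : k) (w : ℕ →₀ k) (m : ℕ) :
    vermaH k lam w m = (lam - 2 * (m : k)) * w m := by
  classical
  rw [vermaH, Finsupp.lsum_apply, Finsupp.sum_apply]
  have : (w.sum fun n a => (((lam - 2 * (n : k)) • Finsupp.lsingle n : k →ₗ[k] (ℕ →₀ k)) a) m)
      = w.sum fun n a => if n = m then (lam - 2 * (m : k)) * a else 0 := by
    apply Finsupp.sum_congr
    intro n _
    simp only [LinearMap.smul_apply, Finsupp.smul_apply, Finsupp.lsingle_apply, Finsupp.single_apply, smul_eq_mul]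
    split <;> simp_all
  rw [this, Finsupp.sum_ite_eq']
  split
  · rfl
  · rename_i h; rw [Finsupp.notMem_support_iff.mp h, mul_zero]

lemma vermaE_apply' (lam : k) (w : ℕ →₀ k) (j : ℕ) :
    vermaE k lam w j = ((j : k) + 1) * (lam - (j : k)) * w (j + 1) := by
  classical
  rw [vermaE, Finsupp.lsum_apply, Finsupp.sum_apply]
  have : (w.sum fun n a => ((((n : k) * (lam - (n : k) + 1)) • Finsupp.lsingle (n - 1) : k →ₗ[k] (ℕ →₀ k)) a) j)
      = w.sum fun n a => if n = j + 1 then ((j : k) + 1) * (lam - (j : k)) * a else 0 := by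
    apply Finsupp.sum_congr
    intro n _
    simp only [LinearMap.smul_apply, Finsupp.smul_apply, Finsupp.lsingle_apply, Finsupp.single_apply, smul_eq_mul]
    by_cases hn : n = j + 1
    · subst hn
      simp only [Nat.add_sub_cancel, if_pos rfl]
      push_cast; ring
    · rw [if_neg hn]
      by_cases hnj : n - 1 = j
      · have hn0 : n = 0 := by omega
        subst hn0; simp
      · simp [hnj]
  rw [this, Finsupp.sum_ite_eq']
  split
  · rfl
  · rename_i h; rw [Finsupp.notMem_support_iff.mp h, mul_zero]

lemma vermaF_single (n : ℕ) : vermaF k (Finsupp.single n (1:k)) = Finsupp.single (n+1) 1 := by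
  simp [vermaF]

end Aux


/-- sl₂ linkage for Verma modules: if `μ ∉ {λ, s·λ} = {λ, −λ−2}`, i.e. the highest
weights lie in distinct dot-orbits of the Weyl group, then every `sl₂`-equivariant linear
map `M(μ) → M(λ)` between the Verma modules vanishes: `Hom_g(M(μ), M(λ)) = 0`. -/
theorem sl2_verma_hom_vanishing (k : Type*) [Field k] [IsAlgClosed k] [CharZero k]
    (lam mu : k) (h₁ : mu ≠ lam) (h₂ : mu ≠ -lam - 2)
    (T : (ℕ →₀ k) →ₗ[k] (ℕ →₀ k))
    (hE : T ∘ₗ vermaE k mu = vermaE k lam ∘ₗ T)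
    (hH : T ∘ₗ vermaH k mu = vermaH k lam ∘ₗ T)
    (hF : T ∘ₗ vermaF k = vermaF k ∘ₗ T) :
    T = 0 := by
  classical
  set w := T (Finsupp.single 0 (1:k)) with hw
  -- H relation on the highest weight vector
  have hHmu : vermaH k mu (Finsupp.single 0 (1:k)) = mu • Finsupp.single 0 (1:k) := by
    simp [vermaH]
  have hHw : vermaH k lam w = mu • w := by
    have := congrArg (fun S => S (Finsupp.single 0 (1:k))) hH
    simp only [LinearMap.comp_apply] at this
    rw [hHmu, map_smul] at this
    exact this.symm
  -- E relation on the highest weight vector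
  have hEmu : vermaE k mu (Finsupp.single 0 (1:k)) = 0 := by
    simp [vermaE]
  have hEw : vermaE k lam w = 0 := by
    have := congrArg (fun S => S (Finsupp.single 0 (1:k))) hE
    simp only [LinearMap.comp_apply] at this
    rw [hEmu, map_zero] at this
    exact this.symm
  -- w = 0
  have hw0 : w = 0 := by
    ext m
    have hHm : (lam - 2 * (m : k)) * w m = mu * w m := by
      have := congrArg (fun v : ℕ →₀ k => v m) hHw
      simpa [vermaH_apply', Finsupp.smul_apply, smul_eq_mul] using this
    by_cases hcase : mu = lam - 2 * (m : k)
    · -- use the E relation; m ≠ 0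
      have hm0 : m ≠ 0 := by
        rintro rfl
        simp at hcase
        exact h₁ hcase
      obtain ⟨j, rfl⟩ := Nat.exists_eq_succ_of_ne_zero hm0
      have hEj : ((j : k) + 1) * (lam - (j : k)) * w (j + 1) = 0 := by
        have := congrArg (fun v : ℕ →₀ k => v j) hEw
        simpa [vermaE_apply'] using this
      have hj1 : ((j : k) + 1) ≠ 0 := Nat.cast_add_one_ne_zero j
      have hlj : lam - (j : k) ≠ 0 := by
        intro h
        have hl : lam = (j : k) := sub_eq_zero.mp h
        apply h₂
        rw [hcase, hl]
        push_cast
        ring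
      have := mul_eq_zero.mp hEj
      rcases this with h' | h'
      · rcases mul_eq_zero.mp h' with h'' | h''
        · exact absurd h'' hj1
        · exact absurd h'' hlj
      · simpa using h'
    · have : (lam - 2 * (m : k) - mu) * w m = 0 := by linear_combination hHm
      rcases mul_eq_zero.mp this with h' | h'
      · exact absurd (show mu = lam - 2 * (m : k) by linear_combination -h') hcase
      · simpa using h'
  -- all basis vectors go to zero
  have hsingle : ∀ m : ℕ, T (Finsupp.single m (1:k)) = 0 := by
    intro m
    induction m with
    | zero => exact hw ▸ hw0 ▸ hw0
    | succ n ih =>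
      have : T (vermaF k (Finsupp.single n (1:k))) = vermaF k (T (Finsupp.single n (1:k))) := by
        have h := LinearMap.congr_fun hF (Finsupp.single n (1:k))
        simpa using h
      rw [vermaF_single, ih, map_zero] at this
      exact this
  apply Finsupp.lhom_ext
  intro n b
  have : Finsupp.single n b = b • Finsupp.single n (1:k) := by
    rw [Finsupp.smul_single, smul_eq_mul, mul_one]
  rw [this, map_smul, hsingle, smul_zero]
  simp
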